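/- arXiv:0801.1872 — 4 statements merged into one kernel-verified Lean document; each statement's English description precedes it below -/
import Mathlib

section
/- The ten functions of s > 0 given by f⁻(s)/s², f⁻(s), s²·f⁻(s), f⁺(s), z(s)/s, s·z(s), g⁻(s)/√s, (√s)³·g⁻(s), g⁺(s)/(√s)³, √s·g⁺(s) are linearly independent over ℝ as functions on (0,∞), where f^±(s) = (1 ± cos√s·cosh√s)/2, z(s) = (sin√s·sinh√s)/2, g^±(s) = (−sin√s·cosh√s ± cos√s·sinh√s)/2. -/
/-!
Put `s = x²` and multiply the relation by `2x⁴`: it becomes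
`a + b cos x cosh x + c sin x sinh x + d sin x cosh x + e cos x sinh x = 0` for `x > 0`, with
polynomials `a, …, e` whose coefficients are the `cᵢ` (and `c₂ ± c₄`). Along `x = 2πn` this
reads `a + b cosh x + e sinh x = 0`, along `x = π/2 + 2πn` it reads `a + d cosh x + c sinh x = 0`.
In terms of `e^{±x}`, the `e^x` part of `p + q eˣ + r e⁻ˣ` dominates unless `q = 0`, after which
`p` dominates, and then `r`: a nonzero polynomial cannot tend to `0` along a sequence going to
infinity. So all five polynomials vanish.
-/

open Filter Topology Real Polynomial

namespace Polynomial

theorem eq_zero_of_tendsto_eval_zero {α : Type*} {l : Filter α} [l.NeBot] {u : α → ℝ}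
    (hu : Tendsto u l atTop) {P : ℝ[X]} (hP : Tendsto (fun i => P.eval (u i)) l (𝓝 0)) :
    P = 0 := by
  by_contra hP0
  rcases lt_or_ge 0 P.degree with hdeg | hdeg
  · have habs := hP.abs
    rw [abs_zero] at habs
    exact not_tendsto_nhds_of_tendsto_atTop ((P.abs_tendsto_atTop hdeg).comp hu) 0 habs
  · rw [eq_C_of_degree_le_zero hdeg] at hP hP0
    simp only [eval_C, tendsto_const_nhds_iff] at hP
    simp [hP] at hP0

theorem tendsto_eval_mul_exp_neg_atTop_nhds_zero (P : ℝ[X]) :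
    Tendsto (fun x => P.eval x * exp (-x)) atTop (𝓝 0) := by
  induction P using Polynomial.induction_on' with
  | add p q hp hq => simpa [add_mul] using hp.add hq
  | monomial n a => simpa [mul_assoc] using (tendsto_pow_mul_exp_neg_atTop_nhds_zero n).const_mul a

theorem eq_zero_of_eval_add_mul_exp_add_mul_exp_neg_eq_zero {α : Type*} {l : Filter α} [l.NeBot]
    {u : α → ℝ} (hu : Tendsto u l atTop) {p q r : ℝ[X]}
    (h : ∀ᶠ i in l, p.eval (u i) + q.eval (u i) * exp (u i) + r.eval (u i) * exp (-u i) = 0) :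
    p = 0 ∧ q = 0 ∧ r = 0 := by
  have hp_exp := (p.tendsto_eval_mul_exp_neg_atTop_nhds_zero).comp hu
  have hr_exp := (r.tendsto_eval_mul_exp_neg_atTop_nhds_zero).comp hu
  have hq : q = 0 := by
    refine eq_zero_of_tendsto_eval_zero hu ?_
    have hlim := (hp_exp.add (hr_exp.mul (tendsto_exp_neg_atTop_nhds_zero.comp hu))).neg
    refine (hlim.congr' ?_).trans (by simp)
    filter_upwards [h] with i hi
    have hexp : exp (u i) * exp (-u i) = 1 := by rw [← exp_add, add_neg_cancel, exp_zero]
    simp only [Function.comp_apply]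
    linear_combination (-exp (-u i)) * hi + q.eval (u i) * hexp
  subst hq
  have hp : p = 0 := by
    refine eq_zero_of_tendsto_eval_zero hu ((hr_exp.neg.congr' ?_).trans (by simp))
    filter_upwards [h] with i hi
    simp only [Function.comp_apply, eval_zero, zero_mul, add_zero] at hi ⊢
    linear_combination -hi
  subst hp
  refine ⟨rfl, rfl, eq_zero_of_tendsto_eval_zero hu (tendsto_const_nhds.congr' ?_)⟩
  filter_upwards [h] with i hi
  simp only [eval_zero, zero_mul, zero_add, mul_eq_zero, exp_ne_zero, or_false] at hi
  exact hi.symm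

theorem eq_zero_of_eval_add_mul_cosh_add_mul_sinh_eq_zero {α : Type*} {l : Filter α} [l.NeBot]
    {u : α → ℝ} (hu : Tendsto u l atTop) {p q r : ℝ[X]}
    (h : ∀ᶠ i in l, p.eval (u i) + q.eval (u i) * cosh (u i) + r.eval (u i) * sinh (u i) = 0) :
    p = 0 ∧ q = 0 ∧ r = 0 := by
  obtain ⟨hp, hqr, hrq⟩ := eq_zero_of_eval_add_mul_exp_add_mul_exp_neg_eq_zero
    (p := p + p) (q := q + r) (r := q - r) hu <| h.mono fun i hi => by
      simp only [eval_add, eval_sub]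
      rw [cosh_eq, sinh_eq] at hi
      linear_combination 2 * hi
  have hqr' : q = r := sub_eq_zero.mp hrq
  subst hqr'
  exact ⟨add_self_eq_zero.mp hp, add_self_eq_zero.mp hqr, add_self_eq_zero.mp hqr⟩

theorem eq_zero_of_eval_trig_mul_hyperbolic_combination_eq_zero {a b c d e : ℝ[X]}
    (h : ∀ᶠ x in atTop, a.eval x + b.eval x * (cos x * cosh x) + c.eval x * (sin x * sinh x)
      + d.eval x * (sin x * cosh x) + e.eval x * (cos x * sinh x) = 0) :
    a = 0 ∧ b = 0 ∧ c = 0 ∧ d = 0 ∧ e = 0 := by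
  have hu : ∀ x₀ : ℝ, Tendsto (fun n : ℕ => x₀ + n * (2 * π)) atTop atTop := fun x₀ =>
    tendsto_atTop_add_const_left _ _ (tendsto_natCast_atTop_atTop.atTop_mul_const (by positivity))
  obtain ⟨ha, hb, he⟩ := eq_zero_of_eval_add_mul_cosh_add_mul_sinh_eq_zero (p := a) (q := b)
    (r := e) (hu 0) <|
    ((hu 0).eventually h).mono fun n hn => by
      rw [cos_add_nat_mul_two_pi, sin_add_nat_mul_two_pi, cos_zero, sin_zero] at hn
      simpa using hn
  subst ha
  obtain ⟨-, hd, hc⟩ := eq_zero_of_eval_add_mul_cosh_add_mul_sinh_eq_zero (p := 0) (q := d)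
    (r := c) (hu (π / 2)) <|
    ((hu (π / 2)).eventually h).mono fun n hn => by
      rw [cos_add_nat_mul_two_pi, sin_add_nat_mul_two_pi, cos_pi_div_two, sin_pi_div_two] at hn
      simp only [eval_zero] at hn ⊢
      linear_combination hn
  exact ⟨rfl, hb, hc, hd, he⟩

end Polynomial

open Real in
theorem ten_determinant_functions_linear_independent
    (c₁ c₂ c₃ c₄ c₅ c₆ c₇ c₈ c₉ c₁₀ : ℝ)
    (fm : ℝ → ℝ) (fp : ℝ → ℝ) (z : ℝ → ℝ) (gm : ℝ → ℝ) (gp : ℝ → ℝ)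
    (hfm : ∀ s, fm s = (1 - cos (sqrt s) * cosh (sqrt s)) / 2)
    (hfp : ∀ s, fp s = (1 + cos (sqrt s) * cosh (sqrt s)) / 2)
    (hz : ∀ s, z s = (sin (sqrt s) * sinh (sqrt s)) / 2)
    (hgm : ∀ s, gm s = (-sin (sqrt s) * cosh (sqrt s) - cos (sqrt s) * sinh (sqrt s)) / 2)
    (hgp : ∀ s, gp s = (-sin (sqrt s) * cosh (sqrt s) + cos (sqrt s) * sinh (sqrt s)) / 2)
    (h : ∀ s : ℝ, 0 < s →
      c₁ * (fm s / s ^ 2) + c₂ * fm s + c₃ * (s ^ 2 * fm s) + c₄ * fp s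
      + c₅ * (z s / s) + c₆ * (s * z s)
      + c₇ * (gm s / sqrt s) + c₈ * (sqrt s ^ 3 * gm s)
      + c₉ * (gp s / sqrt s ^ 3) + c₁₀ * (sqrt s * gp s) = 0) :
    c₁ = 0 ∧ c₂ = 0 ∧ c₃ = 0 ∧ c₄ = 0 ∧ c₅ = 0 ∧ c₆ = 0 ∧ c₇ = 0 ∧ c₈ = 0 ∧ c₉ = 0 ∧ c₁₀ = 0 := by
  obtain ⟨ha, hb, hc, hd, -⟩ := eq_zero_of_eval_trig_mul_hyperbolic_combination_eq_zero
    (a := C c₁ + C (c₂ + c₄) * X ^ 4 + C c₃ * X ^ 8)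
    (b := C (-c₁) + C (c₄ - c₂) * X ^ 4 + C (-c₃) * X ^ 8)
    (c := C c₅ * X ^ 2 + C c₆ * X ^ 6)
    (d := -(C c₉ * X + C c₇ * X ^ 3 + C c₁₀ * X ^ 5 + C c₈ * X ^ 7))
    (e := C c₉ * X - C c₇ * X ^ 3 + C c₁₀ * X ^ 5 - C c₈ * X ^ 7) <|
    (eventually_gt_atTop 0).mono fun x hx => by
      have hs := h (x ^ 2) (by positivity)
      rw [hfm, hfp, hz, hgm, hgp, sqrt_sq hx.le] at hs
      field_simp at hs
      simp only [eval_add, eval_sub, eval_neg, eval_mul, eval_C, eval_pow, eval_X]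
      linear_combination hs
  have h₁ := Polynomial.ext_iff.mp ha 0
  have h₂₄ := Polynomial.ext_iff.mp ha 4
  have h₃ := Polynomial.ext_iff.mp ha 8
  have h₄₂ := Polynomial.ext_iff.mp hb 4
  have h₅ := Polynomial.ext_iff.mp hc 2
  have h₆ := Polynomial.ext_iff.mp hc 6
  have h₉ := Polynomial.ext_iff.mp hd 1
  have h₇ := Polynomial.ext_iff.mp hd 3
  have h₁₀ := Polynomial.ext_iff.mp hd 5
  have h₈ := Polynomial.ext_iff.mp hd 7
  simp only [coeff_add, coeff_neg, coeff_C_mul_X_pow, coeff_C_mul_X, coeff_C,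
    coeff_zero] at h₁ h₂₄ h₃ h₄₂ h₅ h₆ h₉ h₇ h₁₀ h₈
  norm_num at h₁ h₂₄ h₃ h₄₂ h₅ h₆ h₉ h₇ h₁₀ h₈
  exact ⟨h₁, by linarith, h₃, by linarith, h₅, h₆, h₇, h₈, h₉, h₁₀⟩
end

section
/- Let a₁, a₂, a₅, a₆ and ã₁, ã₂, ã₅, ã₆ be real numbers satisfying: a₁·a₅ = ã₁·ã₅, a₁ + a₅ = ã₁ + ã₅, a₂·a₆ = ã₂·ã₆, a₂ + a₆ = ã₂ + ã₆, and a₁·a₂ + a₅·a₆ = ã₁·ã₂ + ã₅·ã₆. Then either (a₁ = ã₁, a₂ = ã₂, a₅ = ã₅, a₆ = ã₆) or (a₁ = ã₅, a₂ = ã₆, a₅ = ã₁, a₆ = ã₂). -/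
section

variable {R : Type*} [CommRing R] [NoZeroDivisors R]

theorem eq_and_eq_or_eq_and_eq_of_mul_eq_of_add_eq {x y u v : R}
    (hp : x * y = u * v) (hs : x + y = u + v) : (x = u ∧ y = v) ∨ (x = v ∧ y = u) := by
  have h : (x - u) * (x - v) = 0 := by linear_combination x * hs - hp
  rcases mul_eq_zero.mp h with h | h
  · have hx : x = u := sub_eq_zero.mp h
    exact Or.inl ⟨hx, by linear_combination hs - hx⟩
  · have hx : x = v := sub_eq_zero.mp h
    exact Or.inr ⟨hx, by linear_combination hs - hx⟩

theorem eq_or_eq_of_mul_add_mul_eq_mul_add_mul {p q r s : R}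
    (h : p * s + q * r = p * r + q * s) : p = q ∨ r = s := by
  have h' : (p - q) * (s - r) = 0 := by linear_combination h
  rcases mul_eq_zero.mp h' with h' | h'
  · exact Or.inl (sub_eq_zero.mp h')
  · exact Or.inr (sub_eq_zero.mp h').symm

end

theorem duality_core (a₁ a₂ a₅ a₆ b₁ b₂ b₅ b₆ : ℝ)
    (h1 : a₁ * a₅ = b₁ * b₅) (h2 : a₁ + a₅ = b₁ + b₅)
    (h3 : a₂ * a₆ = b₂ * b₆) (h4 : a₂ + a₆ = b₂ + b₆)
    (h5 : a₁ * a₂ + a₅ * a₆ = b₁ * b₂ + b₅ * b₆) :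
    (a₁ = b₁ ∧ a₂ = b₂ ∧ a₅ = b₅ ∧ a₆ = b₆) ∨
    (a₁ = b₅ ∧ a₂ = b₆ ∧ a₅ = b₁ ∧ a₆ = b₂) := by
  -- Each end is fixed or swapped on its own; when only one is swapped, `h5` forces one of the
  -- two ends to be degenerate (equal coefficients), so the swap is invisible there.
  rcases eq_and_eq_or_eq_and_eq_of_mul_eq_of_add_eq h1 h2 with ⟨rfl, rfl⟩ | ⟨rfl, rfl⟩ <;>
  rcases eq_and_eq_or_eq_and_eq_of_mul_eq_of_add_eq h3 h4 with ⟨rfl, rfl⟩ | ⟨rfl, rfl⟩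
  · exact Or.inl ⟨rfl, rfl, rfl, rfl⟩
  · rcases eq_or_eq_of_mul_add_mul_eq_mul_add_mul (p := a₁) (q := a₅) (r := a₆) (s := a₂)
      (by linear_combination h5) with rfl | rfl <;> simp
  · rcases eq_or_eq_of_mul_add_mul_eq_mul_add_mul (p := a₁) (q := a₅) (r := a₆) (s := a₂)
      (by linear_combination h5) with rfl | rfl <;> simp
  · exact Or.inr ⟨rfl, rfl, rfl, rfl⟩
end

section
/- The function F(t) = 1 − cos t · cosh t has infinitely many positive zeros. -/
/-!
At `t = 2πn` (`n ≥ 1`) we have `cos t = 1 < cosh t`, so `1 - cos t * cosh t < 0`, while at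
`t = 2πn + π/2` the cosine vanishes and the function equals `1`. The intermediate value theorem
gives a zero in every interval `[2πn, 2πn + π/2]`, so the positive zeros are unbounded.
-/

open Real Set

lemma one_sub_cos_mul_cosh_two_pi_mul_neg {n : ℕ} (hn : n ≠ 0) :
    1 - cos (n * (2 * π)) * cosh (n * (2 * π)) < 0 := by
  have hpos : 0 < (n : ℝ) * (2 * π) := by positivity
  rw [cos_nat_mul_two_pi, one_mul, sub_neg, one_lt_cosh]
  exact hpos.ne'

lemma one_sub_cos_mul_cosh_two_pi_mul_add_pi_div_two (n : ℕ) :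
    1 - cos (n * (2 * π) + π / 2) * cosh (n * (2 * π) + π / 2) = 1 := by
  rw [cos_add_pi_div_two, sin_periodic.nat_mul_eq, sin_zero, neg_zero, zero_mul, sub_zero]

lemma exists_one_sub_cos_mul_cosh_eq_zero_mem_Icc {n : ℕ} (hn : n ≠ 0) :
    ∃ t ∈ Icc (n * (2 * π)) (n * (2 * π) + π / 2), 1 - cos t * cosh t = 0 := by
  have hcont : Continuous fun t => 1 - cos t * cosh t := by fun_prop
  refine intermediate_value_Icc (by linarith [pi_pos]) hcont.continuousOn ⟨?_, ?_⟩
  · exact (one_sub_cos_mul_cosh_two_pi_mul_neg hn).le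
  · simp only [one_sub_cos_mul_cosh_two_pi_mul_add_pi_div_two, zero_le_one]

theorem clamped_clamped_infinitely_many_zeros :
    {t : ℝ | 0 < t ∧ 1 - Real.cos t * Real.cosh t = 0}.Infinite := by
  refine infinite_of_not_bddAbove fun ⟨B, hB⟩ => ?_
  obtain ⟨n, hBn⟩ := exists_nat_gt (max B 0)
  have hn : n ≠ 0 := by rintro rfl; simp at hBn
  have hn_le : (n : ℝ) ≤ n * (2 * π) :=
    le_mul_of_one_le_right n.cast_nonneg (by linarith [pi_gt_three])
  obtain ⟨t, ht, hzero⟩ := exists_one_sub_cos_mul_cosh_eq_zero_mem_Icc hn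
  have hBt : B < t := by linarith [le_max_left B 0, ht.1]
  have ht_pos : 0 < t := by linarith [le_max_right B 0, ht.1]
  exact hBt.not_ge (hB ⟨ht_pos, hzero⟩)
end

section
/- The function G(t) = 1 + cos t · cosh t has infinitely many positive zeros. -/
/-!
On each interval `[2πn + π/2, 2πn + π]` the function `1 + cos t · cosh t` goes from `1`
(where `cos t = 0`) to `1 - cosh t < 0` (where `cos t = -1`), so by the intermediate value
theorem it vanishes inside. These zeros are unbounded, hence infinitely many.
-/

open Real

lemma exists_one_add_cos_mul_cosh_eq_zero_mem_Ioo (n : ℕ) :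
    ∃ t ∈ Set.Ioo (2 * π * n + π / 2) (2 * π * n + π), 1 + cos t * cosh t = 0 := by
  have hcos_left : cos (2 * π * n + π / 2) = 0 := by
    rw [show 2 * π * n + π / 2 = π / 2 + n * (2 * π) by ring, cos_add_nat_mul_two_pi,
      cos_pi_div_two]
  have hcos_right : cos (2 * π * n + π) = -1 := by
    rw [show 2 * π * n + π = π + n * (2 * π) by ring, cos_add_nat_mul_two_pi, cos_pi]
  have hcosh_right : 1 < cosh (2 * π * n + π) :=
    one_lt_cosh.mpr (by positivity)
  have hcont : ContinuousOn (fun t => 1 + cos t * cosh t)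
      (Set.Icc (2 * π * n + π / 2) (2 * π * n + π)) := by fun_prop
  refine intermediate_value_Ioo' (by linarith [pi_pos]) hcont ⟨?_, ?_⟩ <;>
    simp only [hcos_left, hcos_right] <;> linarith

theorem clamped_free_infinitely_many_zeros :
    {t : ℝ | 0 < t ∧ 1 + Real.cos t * Real.cosh t = 0}.Infinite := by
  refine Set.infinite_of_forall_exists_gt fun M => ?_
  obtain ⟨n, hn⟩ := exists_nat_gt (M / (2 * π))
  obtain ⟨t, ⟨ht_left, -⟩, ht⟩ := exists_one_add_cos_mul_cosh_eq_zero_mem_Ioo n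
  have hM : M < 2 * π * n := by rwa [div_lt_iff₀' (by positivity)] at hn
  have hnπ : 0 ≤ 2 * π * n := by positivity
  exact ⟨t, ⟨by linarith [pi_pos], ht⟩, by linarith [pi_pos]⟩
end
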